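/- Suppose F : X × Y → ℝ is continuously differentiable, β-smooth in (x,y), and μ-strongly concave in y on the compact convex set Y. Then the primal function Φ(x) = max_{y∈Y} F(x,y) is differentiable with ∇Φ(x) = ∇_x F(x, y*(x)), and ∇Φ is (β + β²/μ)-Lipschitz. -/

import Mathlib

open Set Filter Topology Asymptotics
open scoped RealInnerProductSpace

/-! Quadratic growth of the strongly concave `F x` around its maximizer, written for `x₁` and
`x₂` and added up, bounds `μ ‖y* x₁ - y* x₂‖²` by the variation of `F x₁ - F x₂` between the two
maximizers, which the mean value theorem bounds by `β ‖x₁ - x₂‖ ‖y* x₁ - y* x₂‖`; so `y*` is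
`β / μ`-Lipschitz. Danskin's argument then sandwiches `Φ x' - Φ x` between `F x' y - F x y` and
`F x' y' - F x y'`, where `y = y* x` and `y' = y* x'`. The descent lemma for `F · y` and the
Lipschitz bound on `y*` show that both sides equal `⟪∇ₓ F x y, x' - x⟫` up to `O(‖x' - x‖²)`. -/

theorem StrongConcaveOn.add_sq_norm_sub_le_of_isMaxOn {E : Type*} [NormedAddCommGroup E]
    [NormedSpace ℝ E] {s : Set E} {μ : ℝ} {f : E → ℝ} {a b : E} (hf : StrongConcaveOn s μ f)
    (hmax : IsMaxOn f s a) (ha : a ∈ s) (hb : b ∈ s) :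
    f b + μ / 2 * ‖b - a‖ ^ 2 ≤ f a := by
  have hlim : Tendsto (fun t : ℝ => f b - f a + (1 - t) * (μ / 2 * ‖a - b‖ ^ 2)) (𝓝[>] 0)
      (𝓝 (f b - f a + μ / 2 * ‖a - b‖ ^ 2)) := by
    have : Continuous (fun t : ℝ => f b - f a + (1 - t) * (μ / 2 * ‖a - b‖ ^ 2)) := by fun_prop
    simpa using this.continuousWithinAt.tendsto (x := 0) (s := Ioi 0)
  -- strong concavity on `[a, b]` near `a`, divided by `t`, then `t → 0`
  have hle : f b - f a + μ / 2 * ‖a - b‖ ^ 2 ≤ 0 := by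
    refine le_of_tendsto hlim ?_
    filter_upwards [Ioo_mem_nhdsGT (show (0 : ℝ) < 1 by norm_num)] with t ⟨ht₀, ht₁⟩
    have hconc := hf.2 ha hb (sub_nonneg.2 ht₁.le) ht₀.le (sub_add_cancel 1 t)
    have hfa : f ((1 - t) • a + t • b) ≤ f a :=
      hmax (hf.1 ha hb (sub_nonneg.2 ht₁.le) ht₀.le (sub_add_cancel 1 t))
    simp only [smul_eq_mul] at hconc
    by_contra! h
    nlinarith [mul_pos ht₀ h]
  rw [norm_sub_rev]
  linarith

variable {E : Type*} [NormedAddCommGroup E] [InnerProductSpace ℝ E] [CompleteSpace E]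

theorem Convex.abs_image_sub_sub_inner_le_of_hasGradientAt {s : Set E} {f : E → ℝ} {f' : E → E}
    {g x y : E} {C : ℝ} (hs : Convex ℝ s) (hf : ∀ z ∈ s, HasGradientAt f (f' z) z)
    (bound : ∀ z ∈ s, ‖f' z - g‖ ≤ C) (hx : x ∈ s) (hy : y ∈ s) :
    |f y - f x - ⟪g, y - x⟫| ≤ C * ‖y - x‖ := by
  have := hs.norm_image_sub_le_of_norm_hasFDerivWithin_le'
    (f' := fun z => InnerProductSpace.toDual ℝ E (f' z)) (φ := InnerProductSpace.toDual ℝ E g)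
    (fun z hz => (hasGradientAt_iff_hasFDerivAt.1 (hf z hz)).hasFDerivWithinAt)
    (fun z hz => by simpa [← map_sub] using bound z hz) hx hy
  simpa using this

theorem abs_sub_sub_inner_le_of_lipschitz_gradient {f : E → ℝ} {f' : E → E} {L : ℝ}
    (hL₀ : 0 ≤ L) (hf : ∀ z, HasGradientAt f (f' z) z) (hL : ∀ z w, ‖f' z - f' w‖ ≤ L * ‖z - w‖)
    (x y : E) : |f y - f x - ⟪f' x, y - x⟫| ≤ L * ‖y - x‖ ^ 2 := by
  have := (convex_closedBall x ‖y - x‖).abs_image_sub_sub_inner_le_of_hasGradientAt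
    (fun z _ => hf z) (fun z hz => (hL z x).trans (mul_le_mul_of_nonneg_left
      (mem_closedBall_iff_norm.1 hz) hL₀))
    (Metric.mem_closedBall_self (norm_nonneg _)) (mem_closedBall_iff_norm.2 le_rfl)
  rwa [mul_assoc, ← sq] at this

theorem hasGradientAt_of_abs_sub_sub_inner_le_sq {f : E → ℝ} {g x : E} {C : ℝ}
    (h : ∀ y, |f y - f x - ⟪g, y - x⟫| ≤ C * ‖y - x‖ ^ 2) : HasGradientAt f g x := by
  rw [hasGradientAt_iff_isLittleO]
  refine IsBigO.trans_isLittleO (g := fun y => ‖y - x‖ ^ 2) ?_ (isLittleO_pow_sub_sub x one_lt_two)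
  exact IsBigO.of_bound C (Eventually.of_forall fun y => by simpa using h y)

theorem StrongConcaveOn.mul_norm_sub_le_of_isMaxOn {s : Set E} {μ K : ℝ} {f g : E → ℝ}
    {f' g' : E → E} {a b : E} (hf : StrongConcaveOn s μ f) (hg : StrongConcaveOn s μ g)
    (hfa : IsMaxOn f s a) (hgb : IsMaxOn g s b) (ha : a ∈ s) (hb : b ∈ s)
    (hf' : ∀ y, HasGradientAt f (f' y) y) (hg' : ∀ y, HasGradientAt g (g' y) y)
    (hK : ∀ y, ‖f' y - g' y‖ ≤ K) : μ * ‖a - b‖ ≤ K := by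
  have hgrowth_f := hf.add_sq_norm_sub_le_of_isMaxOn hfa ha hb
  have hgrowth_g := hg.add_sq_norm_sub_le_of_isMaxOn hgb hb ha
  have hmv := convex_univ.abs_image_sub_sub_inner_le_of_hasGradientAt (f := f - g) (g := 0)
    (fun y _ => hasGradientAt_iff_hasFDerivAt.2 (by rw [map_sub]; exact (hf' y).sub (hg' y)))
    (fun y _ => by simpa using hK y) (mem_univ b) (mem_univ a)
  simp only [Pi.sub_apply, inner_zero_left, sub_zero] at hmv
  rw [norm_sub_rev b a] at hgrowth_f
  have hsq : μ * ‖a - b‖ * ‖a - b‖ ≤ K * ‖a - b‖ := by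
    nlinarith [le_abs_self (f a - g a - (f b - g b))]
  rcases (norm_nonneg (a - b)).eq_or_lt with h | h
  · rw [← h, mul_zero]
    exact (norm_nonneg _).trans (hK a)
  · exact le_of_mul_le_mul_right hsq h

theorem le_mul_add_of_sqrt_sq_add_sq_le {a b c e β : ℝ} (hβ : 0 ≤ β) (hc : 0 ≤ c) (he : 0 ≤ e)
    (h : √(a ^ 2 + b ^ 2) ≤ β * √(c ^ 2 + e ^ 2)) : a ≤ β * (c + e) ∧ b ≤ β * (c + e) := by
  have hce : √(c ^ 2 + e ^ 2) ≤ c + e := Real.sqrt_le_iff.2 ⟨by positivity, by nlinarith⟩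
  have hab : β * √(c ^ 2 + e ^ 2) ≤ β * (c + e) := mul_le_mul_of_nonneg_left hce hβ
  exact ⟨(le_abs_self a).trans ((Real.abs_le_sqrt (by nlinarith)).trans (h.trans hab)),
    (le_abs_self b).trans ((Real.abs_le_sqrt (by nlinarith)).trans (h.trans hab))⟩

section Envelope

variable {E₁ E₂ : Type*} [NormedAddCommGroup E₁] [NormedAddCommGroup E₂]
  {F : E₁ → E₂ → ℝ} {Y : Set E₂} {ystar : E₁ → E₂} {μ β : ℝ}

theorem norm_sub_le_of_isMaxOn_of_strongConcaveOn [InnerProductSpace ℝ E₂] [CompleteSpace E₂]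
    (hμ : 0 < μ) (hconc : ∀ x, StrongConcaveOn Y μ (F x))
    (hdiff : ∀ x y, DifferentiableAt ℝ (F x) y)
    (hL : ∀ x₁ x₂ y, ‖gradient (F x₁) y - gradient (F x₂) y‖ ≤ β * ‖x₁ - x₂‖)
    (hmem : ∀ x, ystar x ∈ Y) (hmax : ∀ x, IsMaxOn (F x) Y (ystar x)) (x₁ x₂ : E₁) :
    ‖ystar x₁ - ystar x₂‖ ≤ β / μ * ‖x₁ - x₂‖ := by
  rw [div_mul_eq_mul_div, le_div_iff₀ hμ, mul_comm]
  exact (hconc x₁).mul_norm_sub_le_of_isMaxOn (hconc x₂) (hmax x₁) (hmax x₂) (hmem x₁) (hmem x₂)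
    (fun y => (hdiff x₁ y).hasGradientAt) (fun y => (hdiff x₂ y).hasGradientAt) (hL x₁ x₂)

variable [InnerProductSpace ℝ E₁] [CompleteSpace E₁]

theorem abs_sub_sub_inner_gradient_le_of_isMaxOn {Φ : E₁ → ℝ} {K : ℝ} (hβ : 0 ≤ β)
    (hΦ : ∀ x, Φ x = F x (ystar x)) (hmem : ∀ x, ystar x ∈ Y)
    (hmax : ∀ x, IsMaxOn (F x) Y (ystar x)) (hdiff : ∀ x y, DifferentiableAt ℝ (fun x => F x y) x)
    (hgrad : ∀ x₁ y₁ x₂ y₂, ‖gradient (fun x => F x y₁) x₁ - gradient (fun x => F x y₂) x₂‖ ≤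
      β * (‖x₁ - x₂‖ + ‖y₁ - y₂‖))
    (hK : ∀ x₁ x₂, ‖ystar x₁ - ystar x₂‖ ≤ K * ‖x₁ - x₂‖) (x x' : E₁) :
    |Φ x' - Φ x - ⟪gradient (fun x' => F x' (ystar x)) x, x' - x⟫| ≤
      (β + β * K) * ‖x' - x‖ ^ 2 := by
  set y := ystar x
  set y' := ystar x'
  have hdescent : ∀ z, |F x' z - F x z - ⟪gradient (fun x => F x z) x, x' - x⟫| ≤
      β * ‖x' - x‖ ^ 2 := fun z =>
    abs_sub_sub_inner_le_of_lipschitz_gradient hβ (fun w => (hdiff w z).hasGradientAt)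
      (fun w w' => by simpa using hgrad w z w' z) x x'
  have hlower : F x' y - F x y ≤ Φ x' - Φ x := by
    rw [hΦ, hΦ]; linarith [show F x' y ≤ F x' y' from hmax x' (hmem x)]
  have hupper : Φ x' - Φ x ≤ F x' y' - F x y' := by
    rw [hΦ, hΦ]; linarith [show F x y' ≤ F x y from hmax x (hmem x')]
  have hcross : ⟪gradient (fun x => F x y') x - gradient (fun x => F x y) x, x' - x⟫ ≤
      β * K * ‖x' - x‖ ^ 2 :=
    calc _ ≤ ‖gradient (fun x => F x y') x - gradient (fun x => F x y) x‖ * ‖x' - x‖ :=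
          real_inner_le_norm _ _
      _ ≤ β * ‖y' - y‖ * ‖x' - x‖ := by gcongr; simpa using hgrad x y' x y
      _ ≤ β * (K * ‖x' - x‖) * ‖x' - x‖ := by gcongr; exact hK x' x
      _ = β * K * ‖x' - x‖ ^ 2 := by ring
  rw [inner_sub_left] at hcross
  have hK₀ : 0 ≤ β * K * ‖x' - x‖ ^ 2 := by
    have hKd : 0 ≤ K * ‖x' - x‖ := (norm_nonneg _).trans (hK x' x)
    nlinarith [mul_nonneg (mul_nonneg hβ hKd) (norm_nonneg (x' - x))]
  have := abs_le.1 (hdescent y)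
  have := abs_le.1 (hdescent y')
  rw [abs_le]
  constructor <;> linarith

end Envelope

theorem primal_function_smooth_general
    {d m : ℕ}
    (Y : Set (EuclideanSpace ℝ (Fin m)))
    (F : EuclideanSpace ℝ (Fin d) → EuclideanSpace ℝ (Fin m) → ℝ)
    (μ β : ℝ) (hμ : 0 < μ) (hβ : 0 < β)
    (hC1 : ContDiff ℝ 1 (fun p : EuclideanSpace ℝ (Fin d) × EuclideanSpace ℝ (Fin m) =>
      F p.1 p.2))
    (hsmooth : ∀ x₁ y₁ x₂ y₂,
      Real.sqrt (‖gradient (fun x => F x y₁) x₁ - gradient (fun x => F x y₂) x₂‖ ^ 2 +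
          ‖gradient (F x₁) y₁ - gradient (F x₂) y₂‖ ^ 2) ≤
        β * Real.sqrt (‖x₁ - x₂‖ ^ 2 + ‖y₁ - y₂‖ ^ 2))
    (hconc : ∀ x, StrongConcaveOn Y μ (F x))
    (ystar : EuclideanSpace ℝ (Fin d) → EuclideanSpace ℝ (Fin m))
    (hmem : ∀ x, ystar x ∈ Y) (hmax : ∀ x, IsMaxOn (F x) Y (ystar x))
    (Φ : EuclideanSpace ℝ (Fin d) → ℝ) (hΦ : ∀ x, Φ x = F x (ystar x)) :
    (∀ x, HasGradientAt Φ (gradient (fun x' => F x' (ystar x)) x) x) ∧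
      ∀ x₁ x₂, ‖gradient Φ x₁ - gradient Φ x₂‖ ≤ (β + β ^ 2 / μ) * ‖x₁ - x₂‖ := by
  have hdiff := hC1.differentiable one_ne_zero
  have hdx : ∀ x y, DifferentiableAt ℝ (fun x => F x y) x := fun x y =>
    DifferentiableAt.comp (g := fun p => F p.1 p.2) (f := fun x => (x, y)) x (hdiff (x, y))
      (by fun_prop)
  have hdy : ∀ x y, DifferentiableAt ℝ (F x) y := fun x y =>
    DifferentiableAt.comp (g := fun p => F p.1 p.2) (f := fun y => (x, y)) y (hdiff (x, y))
      (by fun_prop)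
  have hsplit := fun x₁ y₁ x₂ y₂ =>
    le_mul_add_of_sqrt_sq_add_sq_le hβ.le (norm_nonneg _) (norm_nonneg _) (hsmooth x₁ y₁ x₂ y₂)
  have hgx := fun x₁ y₁ x₂ y₂ => (hsplit x₁ y₁ x₂ y₂).1
  have hlip := norm_sub_le_of_isMaxOn_of_strongConcaveOn hμ hconc hdy
    (fun x₁ x₂ y => by simpa using (hsplit x₁ y x₂ y).2) hmem hmax
  have hgrad : ∀ x, HasGradientAt Φ (gradient (fun x' => F x' (ystar x)) x) x := fun x =>
    hasGradientAt_of_abs_sub_sub_inner_le_sq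
      (abs_sub_sub_inner_gradient_le_of_isMaxOn hβ.le hΦ hmem hmax hdx hgx hlip x)
  refine ⟨hgrad, fun x₁ x₂ => ?_⟩
  rw [(hgrad x₁).gradient, (hgrad x₂).gradient]
  calc _ ≤ β * (‖x₁ - x₂‖ + ‖ystar x₁ - ystar x₂‖) := hgx _ _ _ _
    _ ≤ β * (‖x₁ - x₂‖ + β / μ * ‖x₁ - x₂‖) := by gcongr; exact hlip x₁ x₂
    _ = (β + β ^ 2 / μ) * ‖x₁ - x₂‖ := by ring

/-- Smoothness of the primal function: if `F` is continuously differentiable,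
`β`-smooth jointly in `(x,y)` and `μ`-strongly concave in `y` on the compact convex
set `Y`, then `Φ(x) = max_{y∈Y} F(x,y)` is differentiable with
`∇Φ(x) = ∇_x F(x, y*(x))` and `∇Φ` is `(β + β²/μ)`-Lipschitz. -/
theorem primal_function_smooth
    {d m : ℕ}
    (Y : Set (EuclideanSpace ℝ (Fin m))) (hYne : Y.Nonempty) (hYcpt : IsCompact Y)
    (hYconv : Convex ℝ Y)
    (F : EuclideanSpace ℝ (Fin d) → EuclideanSpace ℝ (Fin m) → ℝ)
    (μ β : ℝ) (hμ : 0 < μ) (hβ : 0 < β)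
    (hC1 : ContDiff ℝ 1 (fun p : EuclideanSpace ℝ (Fin d) × EuclideanSpace ℝ (Fin m) =>
      F p.1 p.2))
    (hsmooth : ∀ x₁ y₁ x₂ y₂,
      Real.sqrt (‖gradient (fun x => F x y₁) x₁ - gradient (fun x => F x y₂) x₂‖ ^ 2 +
          ‖gradient (F x₁) y₁ - gradient (F x₂) y₂‖ ^ 2) ≤
        β * Real.sqrt (‖x₁ - x₂‖ ^ 2 + ‖y₁ - y₂‖ ^ 2))
    (hconc : ∀ x, StrongConcaveOn Y μ (F x))
    (ystar : EuclideanSpace ℝ (Fin d) → EuclideanSpace ℝ (Fin m))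
    (hmem : ∀ x, ystar x ∈ Y) (hmax : ∀ x, IsMaxOn (F x) Y (ystar x))
    (Φ : EuclideanSpace ℝ (Fin d) → ℝ) (hΦ : ∀ x, Φ x = F x (ystar x)) :
    (∀ x, HasGradientAt Φ (gradient (fun x' => F x' (ystar x)) x) x) ∧
      ∀ x₁ x₂, ‖gradient Φ x₁ - gradient Φ x₂‖ ≤ (β + β ^ 2 / μ) * ‖x₁ - x₂‖ :=
  primal_function_smooth_general Y F μ β hμ hβ hC1 hsmooth hconc ystar hmem hmax Φ hΦ
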